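/- If G is a connected graph with maximum degree Δ ∈ {1, 2, n−1} (n the order of G), then F_c(G) ≤ γ_c(G)·(Δ − 2) + 2. -/

import Mathlib

open SimpleGraph

variable {V : Type*}

/-- One step of the (zero) forcing process: a colored vertex with exactly one
uncolored neighbor forces that neighbor to become colored. -/
def zfStep (G : SimpleGraph V) (S : Set V) : Set V :=
  S ∪ {w | ∃ v ∈ S, G.neighborSet v \ S = {w}}

/-- `S` is a forcing set if iterating the forcing process colors all vertices. -/
def IsForcingSet (G : SimpleGraph V) (S : Set V) : Prop :=
  ∃ n : ℕ, (zfStep G)^[n] S = Set.univ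

/-- A connected forcing set: a forcing set inducing a connected subgraph. -/
def IsConnForcingSet (G : SimpleGraph V) (S : Set V) : Prop :=
  IsForcingSet G S ∧ (G.induce S).Connected

/-- The forcing number `F(G)`. -/
noncomputable def forcingNumber (G : SimpleGraph V) : ℕ :=
  sInf (Set.ncard '' {S : Set V | IsForcingSet G S})

/-- The connected forcing number `F_c(G)`. -/
noncomputable def connForcingNumber (G : SimpleGraph V) : ℕ :=
  sInf (Set.ncard '' {S : Set V | IsConnForcingSet G S})

/-- A connected dominating set: every vertex outside `D` has a neighbor in `D`,
and `D` induces a connected subgraph. -/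
def IsConnDomSet (G : SimpleGraph V) (D : Set V) : Prop :=
  (∀ v ∉ D, ∃ u ∈ D, G.Adj u v) ∧ (G.induce D).Connected

/-- The connected domination number `γ_c(G)`. -/
noncomputable def connDomNumber (G : SimpleGraph V) : ℕ :=
  sInf (Set.ncard '' {D : Set V | IsConnDomSet G D})

/-!
If `Δ ≤ 2`, any edge is a connected forcing set: a connected colored set with at least two
vertices that is not everything has a colored vertex with an uncolored neighbour, and since
that vertex also has a colored neighbour and degree at most two, it forces. If `Δ = n - 1 ≥ 3`
there is a universal vertex `v`; all vertices but one form a connected set in which `v` forces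
the last one, and `n - 1 = Δ ≤ γ_c (Δ - 2) + 2` because `γ_c ≥ 1`.
-/

open Set

lemma subset_zfStep (G : SimpleGraph V) (S : Set V) : S ⊆ zfStep G S := subset_union_left

section

variable {G : SimpleGraph V}

lemma zfStep_eq_univ_of_forall_forced {S : Set V}
    (h : ∀ w ∉ S, ∃ v ∈ S, G.neighborSet v \ S = {w}) : zfStep G S = univ :=
  eq_univ_of_forall fun w => (em (w ∈ S)).imp id (h w)

lemma connected_induce_union_of_forall_adj {S T : Set V} (hS : (G.induce S).Connected)
    (hT : ∀ x ∈ T, ∃ v ∈ S, G.Adj v x) : (G.induce (S ∪ T)).Connected := by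
  obtain ⟨⟨u, hu⟩⟩ := hS.nonempty
  refine induce_connected_of_patches u (Or.inl hu) fun {x} hx => ?_
  rcases hx with hxS | hxT
  · exact ⟨S, subset_union_left, hu, hxS, hS.preconnected _ _⟩
  · obtain ⟨v, hv, hvx⟩ := hT x hxT
    have hconn : (G.induce (S ∪ {v, x})).Connected :=
      induce_union_connected hS.preconnected (induce_pair_connected_of_adj hvx).preconnected
        ⟨v, hv, mem_insert v _⟩
    refine ⟨S ∪ {v, x}, ?_, Or.inl hu, Or.inr (mem_insert_of_mem v rfl), hconn.preconnected _ _⟩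
    exact union_subset subset_union_left
      (insert_subset (Or.inl hv) (singleton_subset_iff.mpr (Or.inr hxT)))

lemma connected_induce_zfStep {S : Set V} (hS : (G.induce S).Connected) :
    (G.induce (zfStep G S)).Connected := by
  refine connected_induce_union_of_forall_adj hS fun w ⟨v, hv, hforce⟩ => ⟨v, hv, ?_⟩
  have hw : w ∈ G.neighborSet v \ S := hforce ▸ mem_singleton w
  exact hw.1

lemma exists_adj_mem_notMem (hG : G.Connected) {S : Set V} (hS : S.Nonempty)
    (hS' : S ≠ univ) : ∃ v ∈ S, ∃ w ∉ S, G.Adj v w := by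
  obtain ⟨a, ha⟩ := hS
  obtain ⟨b, hb⟩ := (ne_univ_iff_exists_notMem S).mp hS'
  obtain ⟨d, -, hd, hd'⟩ := (hG.preconnected a b).some.exists_boundary_dart S ha hb
  exact ⟨d.fst, hd, d.snd, hd', d.adj⟩

lemma exists_adj_of_connected_induce {S : Set V} (hS : (G.induce S).Connected)
    (hS' : S.Nontrivial) {v : V} (hv : v ∈ S) : ∃ u ∈ S, G.Adj v u := by
  have : Nontrivial S := nontrivial_coe_sort.mpr hS'
  obtain ⟨u, hvu⟩ := hS.preconnected.exists_adj_of_nontrivial ⟨v, hv⟩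
  exact ⟨u, u.2, hvu⟩

lemma IsForcingSet.of_invariant [Finite V] {P : Set V → Prop}
    (hP : ∀ S, P S → P (zfStep G S)) (hgrow : ∀ S, P S → S ≠ univ → S ⊂ zfStep G S)
    {S : Set V} (hS : P S) : IsForcingSet G S := by
  induction S using WellFoundedGT.induction with
  | _ S ih =>
    by_cases huniv : S = univ
    · exact ⟨0, huniv⟩
    · obtain ⟨n, hn⟩ := ih _ (hgrow S hS huniv) (hP S hS)
      exact ⟨n + 1, hn⟩

lemma isForcingSet_compl_singleton {v x : V} (h : G.Adj v x) : IsForcingSet G {x}ᶜ := by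
  refine ⟨1, zfStep_eq_univ_of_forall_forced fun w hw => ⟨v, h.ne, ?_⟩⟩
  rw [notMem_compl_iff, mem_singleton_iff] at hw
  rw [hw, sdiff_compl, inter_eq_right, singleton_subset_iff]
  exact h

lemma connected_induce_of_isUniversal {v : V} (hv : G.IsUniversal v) {S : Set V} (hvS : v ∈ S) :
    (G.induce S).Connected :=
  Connected.of_isUniversal (v := ⟨v, hvS⟩) fun _ hw => hv fun h => hw (Subtype.ext h)

lemma connForcingNumber_le {S : Set V} (hS : IsConnForcingSet G S) :
    connForcingNumber G ≤ S.ncard :=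
  Nat.sInf_le ⟨S, hS, rfl⟩

lemma connForcingNumber_le_card (hG : G.Connected) : connForcingNumber G ≤ Nat.card V := by
  rw [← ncard_univ]
  exact connForcingNumber_le ⟨⟨0, rfl⟩, (induceUnivIso G).connected_iff.mpr hG⟩

lemma connForcingNumber_le_card_sub_one [Finite V] [Nontrivial V] {v : V} (hv : G.IsUniversal v) :
    connForcingNumber G ≤ Nat.card V - 1 := by
  obtain ⟨x, hxv⟩ := exists_ne v
  have hS : IsConnForcingSet G {x}ᶜ :=
    ⟨isForcingSet_compl_singleton (hv hxv.symm), connected_induce_of_isUniversal hv hxv.symm⟩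
  rw [← ncard_singleton x, ← ncard_compl]
  exact connForcingNumber_le hS

lemma one_le_connDomNumber [Finite V] (hG : G.Connected) : 1 ≤ connDomNumber G := by
  have huniv : IsConnDomSet G univ :=
    ⟨fun v hv => absurd (mem_univ v) hv, (induceUnivIso G).connected_iff.mpr hG⟩
  refine le_csInf ⟨_, univ, huniv, rfl⟩ ?_
  rintro _ ⟨D, hD, rfl⟩
  exact (ncard_pos D.toFinite).mpr (nonempty_coe_sort.mp hD.2.nonempty)

end

section MaxDegreeLeTwo

variable [Fintype V] {G : SimpleGraph V} [DecidableRel G.Adj]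

lemma ssubset_zfStep_of_maxDegree_le_two (hG : G.Connected) (hΔ : G.maxDegree ≤ 2) {S : Set V}
    (hS : (G.induce S).Connected) (hS' : S.Nontrivial) (hne : S ≠ univ) : S ⊂ zfStep G S := by
  classical
  obtain ⟨v, hv, w, hw, hvw⟩ := exists_adj_mem_notMem hG hS'.nonempty hne
  obtain ⟨u, hu, hvu⟩ := exists_adj_of_connected_induce hS hS' hv
  have hforce : G.neighborSet v \ S = {w} := by
    refine eq_singleton_iff_unique_mem.mpr ⟨⟨hvw, hw⟩, fun w' ⟨hvw', hw'⟩ => ?_⟩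
    by_contra hne'
    have : 2 < G.degree v := by
      rw [← card_neighborFinset_eq_degree, Finset.two_lt_card]
      refine ⟨u, by simpa using hvu, w, by simpa using hvw, w', by simpa using hvw', ?_, ?_, ?_⟩
      exacts [fun h => hw (h ▸ hu), fun h => hw' (h ▸ hu), fun h => hne' h.symm]
    exact absurd (G.degree_le_maxDegree v) (by omega)
  exact ssubset_of_subset_not_subset (subset_zfStep G S) fun h => hw (h (Or.inr ⟨v, hv, hforce⟩))

lemma isForcingSet_of_maxDegree_le_two (hG : G.Connected) (hΔ : G.maxDegree ≤ 2) {S : Set V}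
    (hS : (G.induce S).Connected) (hS' : S.Nontrivial) : IsForcingSet G S :=
  IsForcingSet.of_invariant (P := fun S => (G.induce S).Connected ∧ S.Nontrivial)
    (fun S hS => ⟨connected_induce_zfStep hS.1, hS.2.mono (subset_zfStep G S)⟩)
    (fun _ hS => ssubset_zfStep_of_maxDegree_le_two hG hΔ hS.1 hS.2) ⟨hS, hS'⟩

lemma connForcingNumber_le_two (hG : G.Connected) (hΔ : G.maxDegree ≤ 2) :
    connForcingNumber G ≤ 2 := by
  cases subsingleton_or_nontrivial V with
  | inl _ =>
    exact (connForcingNumber_le_card hG).trans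
      ((Finite.card_le_one_iff_subsingleton.mpr ‹_›).trans one_le_two)
  | inr _ =>
    obtain ⟨u, w, huw⟩ : ∃ u w, G.Adj u w :=
      ⟨_, hG.preconnected.exists_adj_of_nontrivial (Classical.arbitrary V)⟩
    have hS : IsConnForcingSet G {u, w} :=
      ⟨isForcingSet_of_maxDegree_le_two hG hΔ (induce_pair_connected_of_adj huw)
        (nontrivial_pair huw.ne), induce_pair_connected_of_adj huw⟩
    exact (connForcingNumber_le hS).trans_eq (ncard_pair huw.ne)

end MaxDegreeLeTwo

/-- If `G` is a connected graph with maximum degree `Δ ∈ {1, 2, n-1}` (`n` the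
order of `G`), then `F_c(G) ≤ γ_c(G)(Δ - 2) + 2`. -/
theorem connForcingNumber_le_connDomNumber_special {V : Type*} [Fintype V]
    (G : SimpleGraph V) [DecidableRel G.Adj] (hG : G.Connected)
    (hΔ : G.maxDegree = 1 ∨ G.maxDegree = 2 ∨ G.maxDegree = Fintype.card V - 1) :
    connForcingNumber G ≤ connDomNumber G * (G.maxDegree - 2) + 2 := by
  rcases le_or_gt G.maxDegree 2 with hle | hgt
  · have := connForcingNumber_le_two hG hle
    omega
  have hΔn : G.maxDegree = Fintype.card V - 1 := by omega
  have : Nontrivial V := Fintype.one_lt_card_iff_nontrivial.mp (by omega)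
  obtain ⟨v, hv⟩ := G.exists_maximal_degree_vertex
  have huniv : G.IsUniversal v := (G.degree_eq_card_sub_one v).mp (hv ▸ hΔn)
  calc connForcingNumber G ≤ Fintype.card V - 1 :=
        Nat.card_eq_fintype_card (α := V) ▸ connForcingNumber_le_card_sub_one huniv
    _ = 1 * (G.maxDegree - 2) + 2 := by omega
    _ ≤ connDomNumber G * (G.maxDegree - 2) + 2 := by
        gcongr
        exact one_le_connDomNumber hG
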